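/- arXiv:2512.08745 — 3 statements merged into one kernel-verified Lean document; each statement's English description precedes it below -/
import Mathlib

section
/- Fix σ > 0, γ ∈ ℝ, T > 0. On [0,T] × ℝ define v(t,x) := x − (σ²/2)(1+γ)(T−t) and w(t,x) := x − σ²(T−t), and set â := −σ. Then: (i) â is the unique maximizer over a ∈ ℝ of a ↦ a²/2 − (a − â)² + σ a ∂_x v(t,x) (so â is a fixed point of the best-response map); (ii) ∂_t v + σ â ∂_x v + (σ²/2) ∂²_{xx} v + â²/2 − (γσ²/2)(∂_x w)² = 0 and ∂_t w + σ â ∂_x w + (σ²/2) ∂²_{xx} w = 0 hold on [0,T) × ℝ; (iii) v(T,x) = x and w(T,x) = x. -/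
theorem stmt7 (σ γ T : ℝ) (hσ : 0 < σ) (hT : 0 < T) :
    let v : ℝ → ℝ → ℝ := fun t x => x - σ^2/2 * (1 + γ) * (T - t)
    let w : ℝ → ℝ → ℝ := fun t x => x - σ^2 * (T - t)
    let ahat : ℝ := -σ
    (∀ t ∈ Set.Ico (0:ℝ) T, ∀ x : ℝ,
      (∀ a : ℝ, a ≠ ahat →
        a^2/2 - (a - ahat)^2 + σ * a * (deriv (fun y => v t y) x)
          < ahat^2/2 - (ahat - ahat)^2 + σ * ahat * (deriv (fun y => v t y) x)) ∧
      (deriv (fun s => v s x) t + σ * ahat * (deriv (fun y => v t y) x)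
        + σ^2/2 * (deriv (deriv (fun y => v t y)) x)
        + ahat^2/2 - γ * σ^2/2 * (deriv (fun y => w t y) x)^2 = 0) ∧
      (deriv (fun s => w s x) t + σ * ahat * (deriv (fun y => w t y) x)
        + σ^2/2 * (deriv (deriv (fun y => w t y)) x) = 0)) ∧
    (∀ x : ℝ, v T x = x ∧ w T x = x) := by
  intro v w ahat
  have hdx : ∀ (c x : ℝ), deriv (fun y : ℝ => y - c) x = 1 := by
    intro c x
    simpa using ((hasDerivAt_id x).sub_const c).deriv
  have hdxx : ∀ (c : ℝ), deriv (deriv (fun y : ℝ => y - c)) = fun _ => (0:ℝ) := by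
    intro c
    have : deriv (fun y : ℝ => y - c) = fun _ => (1:ℝ) := funext fun x => hdx c x
    rw [this]; funext x; simp
  have hdt : ∀ (c x t : ℝ), deriv (fun s : ℝ => x - c * (T - s)) t = c := by
    intro c x t
    have h : HasDerivAt (fun s : ℝ => x - c * (T - s)) c t := by
      have h1 : HasDerivAt (fun s : ℝ => T - s) (-1) t := by
        simpa using ((hasDerivAt_id t).const_sub T)
      have h2 := (h1.const_mul c).const_sub x
      simpa using h2
    exact h.deriv
  constructor
  · intro t ht x
    refine ⟨?_, ?_, ?_⟩
    · intro a ha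
      have h1 : deriv (fun y => v t y) x = 1 := hdx _ x
      rw [h1]
      have hne : a + σ ≠ 0 := by
        intro h; apply ha; show a = -σ; linarith
      have h2 : (a + σ)^2 > 0 := by positivity
      show a^2/2 - (a - (-σ))^2 + σ * a * 1 < (-σ)^2/2 - (-σ - (-σ))^2 + σ * (-σ) * 1
      nlinarith
    · show deriv (fun s => v s x) t + σ * ahat * (deriv (fun y => v t y) x)
        + σ^2/2 * (deriv (deriv (fun y => v t y)) x)
        + ahat^2/2 - γ * σ^2/2 * (deriv (fun y => w t y) x)^2 = 0
      simp only [v, w]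
      rw [hdx, hdt, hdx, hdxx]
      show σ ^ 2 / 2 * (1 + γ) + σ * (-σ) * 1 + σ ^ 2 / 2 * 0 + (-σ) ^ 2 / 2 - γ * σ ^ 2 / 2 * 1 ^ 2 = 0
      ring
    · show deriv (fun s => w s x) t + σ * ahat * (deriv (fun y => w t y) x)
        + σ^2/2 * (deriv (deriv (fun y => w t y)) x) = 0
      simp only [w]
      rw [hdx, hdt, hdxx]
      show σ ^ 2 + σ * (-σ) * 1 + σ ^ 2 / 2 * 0 = 0
      ring
  · intro x
    constructor <;> simp [v, w]
end

section
/- Fix σ > 0, k > 0, κ₁, κ₂, γ ∈ ℝ, T > 0, N ≥ 1. Write E(t) := e^{σk(t−T)} and â(t) := σE(t) + (κ₁/(kN))(1−E(t)) + κ₂/N. Let η, η_m : [0,T] → ℝ be the C¹ functions with η(T) = η_m(T) = 0 solving η'(t) = −â(t)·( (σ/2)E(t) + (κ₁/k·(1−E(t)) + κ₂)(1 − 1/(2N)) ) + (γσ²/2)E(t)² and η_m'(t) = −σ â(t) E(t). For x ∈ ℝ^N and i ∈ {1,…,N} define v^i(t,x) := E(t)x_i + (κ₁/(σkN))(1−E(t))·Σ_{ℓ=1}^N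 x_ℓ + η(t) and v^{m,i}(t,x) := E(t)x_i + η_m(t). Then on [0,T) × ℝ^N: (a) σ ∂_{x_i} v^i(t,x) + κ₂/N = â(t); (b) ∂_t v^i + σ Σ_{ℓ=1}^N (â(t) − k x_ℓ) ∂_{x_ℓ} v^i + (σ²/2) Σ_{ℓ=1}^N ∂²_{x_ℓ x_ℓ} v^i − â(t)²/2 + (κ₁/N) Σ_{ℓ=1}^N x_ℓ + κ₂ â(t) − (γσ²/2) Σ_{ℓ=1}^N (∂_{x_ℓ} v^{m,i})² = 0; (c) ∂_t v^{m,i} + σ Σ_{ℓ=1}^N (â(t) − k x_ℓ) ∂_{x_ℓ} v^{m,i} + (σ²/2) Σ_{ℓ=1}^N ∂²_{x_ℓ x_ℓ} v^{m,i} = 0; (d) v^i(T,x) = x_i and v^{m,i}(T,x) = x_i. -/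
/-!
Both value functions are affine in `x`, so their second spatial derivatives vanish and their
first ones are constants: `∂_ℓ v^i = E δ_{ℓi} + κ₁(1 - E)/(σkN)` and `∂_ℓ v^{m,i} = E δ_{ℓi}`.
After substitution, the coefficients of `x_i` and of `Σ x_ℓ` cancel because `E' = σkE` and
`σk · κ₁/(σkN) = κ₁/N`; the terms that do not depend on `x` cancel by the ODEs for `η` and `η_m`.
-/

open Finset

section PartialDerivatives

variable {ι : Type*} [DecidableEq ι]

theorem hasDerivAt_update_apply (x : ι → ℝ) (ℓ i : ι) (s : ℝ) :
    HasDerivAt (fun s => Function.update x ℓ s i) ((Pi.single ℓ 1 : ι → ℝ) i) s :=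
  hasDerivAt_pi.mp (hasDerivAt_update x ℓ s) i

theorem hasDerivAt_mul_update_apply_add (a b : ℝ) (x : ι → ℝ) (ℓ i : ι) (s : ℝ) :
    HasDerivAt (fun s => a * Function.update x ℓ s i + b) (a * (Pi.single ℓ 1 : ι → ℝ) i) s :=
  ((hasDerivAt_update_apply x ℓ i s).const_mul a).add_const b

variable [Fintype ι]

theorem hasDerivAt_sum_update (x : ι → ℝ) (ℓ : ι) (s : ℝ) :
    HasDerivAt (fun s => ∑ m, Function.update x ℓ s m) 1 s := by
  simpa using HasDerivAt.fun_sum (u := univ) fun m _ => hasDerivAt_update_apply x ℓ m s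

theorem hasDerivAt_mul_update_apply_add_mul_sum (a C b : ℝ) (x : ι → ℝ) (ℓ i : ι) (s : ℝ) :
    HasDerivAt (fun s => a * Function.update x ℓ s i + C * ∑ m, Function.update x ℓ s m + b)
      (a * (Pi.single ℓ 1 : ι → ℝ) i + C) s := by
  simpa using (((hasDerivAt_update_apply x ℓ i s).const_mul a).add
    ((hasDerivAt_sum_update x ℓ s).const_mul C)).add_const b

theorem sum_mul_mul_single (f : ι → ℝ) (e : ℝ) (i : ι) :
    ∑ ℓ, f ℓ * (e * (Pi.single ℓ 1 : ι → ℝ) i) = f i * e := by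
  simp [Pi.single_apply]

theorem sum_mul_mul_single_add (f : ι → ℝ) (e C : ℝ) (i : ι) :
    ∑ ℓ, f ℓ * (e * (Pi.single ℓ 1 : ι → ℝ) i + C) = f i * e + C * ∑ ℓ, f ℓ := by
  simp only [mul_add, sum_add_distrib, sum_mul_mul_single, mul_sum, mul_comm]

theorem sum_sq_mul_single (e : ℝ) (i : ι) : ∑ ℓ, (e * (Pi.single ℓ 1 : ι → ℝ) i) ^ 2 = e ^ 2 := by
  simp [Pi.single_apply, mul_ite]

end PartialDerivatives

theorem deriv_deriv_eq_zero_of_hasDerivAt_const {f : ℝ → ℝ} {c : ℝ} (h : ∀ s, HasDerivAt f c s)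
    (y : ℝ) : deriv (deriv f) y = 0 := by
  rw [show deriv f = fun _ => c from funext fun s => (h s).deriv, deriv_const]

theorem hasDerivAt_exp_mul_sub (α T t : ℝ) :
    HasDerivAt (fun s => Real.exp (α * (s - T))) (α * Real.exp (α * (t - T))) t := by
  simpa [mul_comm] using (((hasDerivAt_id t).sub_const T).const_mul α).exp

theorem hjb_residual_eq_zero {σ k κ₁ κ₂ γ n e a c : ℝ} (hσ : σ ≠ 0) (hk : k ≠ 0) (hn : n ≠ 0)
    (xi S : ℝ) (ha : a = σ * e + κ₁ / (k * n) * (1 - e) + κ₂ / n) (hc : c = κ₁ / (σ * k * n)) :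
    σ * k * e * xi - c * (σ * k * e) * S
      + (-a * (σ / 2 * e + (κ₁ / k * (1 - e) + κ₂) * (1 - 1 / (2 * n))) + γ * σ ^ 2 / 2 * e ^ 2)
      + σ * ((a - k * xi) * e + c * (1 - e) * (n * a - k * S))
      - a ^ 2 / 2 + κ₁ / n * S + κ₂ * a - γ * σ ^ 2 / 2 * e ^ 2 = 0 := by
  subst ha hc
  field_simp
  ring

theorem stmt8_general (σ k κ₁ κ₂ γ T : ℝ) (N : ℕ)
    (hσ : 0 < σ) (hk : 0 < k) (hN : 1 ≤ N)
    (η ηm : ℝ → ℝ) (hηT : η T = 0) (hηmT : ηm T = 0)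
    (hη : ∀ t ∈ Set.Icc (0:ℝ) T,
      HasDerivAt η
        (-(σ * Real.exp (σ*k*(t-T)) + κ₁/(k*(N:ℝ)) * (1 - Real.exp (σ*k*(t-T))) + κ₂/(N:ℝ))
            * ((σ/2) * Real.exp (σ*k*(t-T))
              + (κ₁/k * (1 - Real.exp (σ*k*(t-T))) + κ₂) * (1 - 1/(2*(N:ℝ))))
          + γ*σ^2/2 * (Real.exp (σ*k*(t-T)))^2) t)
    (hηm : ∀ t ∈ Set.Icc (0:ℝ) T,
      HasDerivAt ηm
        (-(σ * (σ * Real.exp (σ*k*(t-T)) + κ₁/(k*(N:ℝ)) * (1 - Real.exp (σ*k*(t-T))) + κ₂/(N:ℝ))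
            * Real.exp (σ*k*(t-T)))) t) :
    let E : ℝ → ℝ := fun t => Real.exp (σ*k*(t-T))
    let ahat : ℝ → ℝ := fun t => σ * E t + κ₁/(k*(N:ℝ)) * (1 - E t) + κ₂/(N:ℝ)
    let v : Fin N → ℝ → (Fin N → ℝ) → ℝ := fun i t x =>
      E t * x i + κ₁/(σ*k*(N:ℝ)) * (1 - E t) * (∑ ℓ, x ℓ) + η t
    let vm : Fin N → ℝ → (Fin N → ℝ) → ℝ := fun i t x => E t * x i + ηm t
    ∀ i : Fin N, ∀ t ∈ Set.Ico (0:ℝ) T, ∀ x : Fin N → ℝ,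
      (σ * deriv (fun s => v i t (Function.update x i s)) (x i) + κ₂/(N:ℝ) = ahat t) ∧
      (deriv (fun s => v i s x) t
        + σ * ∑ ℓ, (ahat t - k * x ℓ) * deriv (fun s => v i t (Function.update x ℓ s)) (x ℓ)
        + σ^2/2 * ∑ ℓ, deriv (deriv (fun s => v i t (Function.update x ℓ s))) (x ℓ)
        - (ahat t)^2/2 + κ₁/(N:ℝ) * ∑ ℓ, x ℓ + κ₂ * ahat t
        - γ*σ^2/2 * ∑ ℓ, (deriv (fun s => vm i t (Function.update x ℓ s)) (x ℓ))^2 = 0) ∧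
      (deriv (fun s => vm i s x) t
        + σ * ∑ ℓ, (ahat t - k * x ℓ) * deriv (fun s => vm i t (Function.update x ℓ s)) (x ℓ)
        + σ^2/2 * ∑ ℓ, deriv (deriv (fun s => vm i t (Function.update x ℓ s))) (x ℓ) = 0) ∧
      (v i T x = x i ∧ vm i T x = x i) := by
  intro E ahat v vm i t ht x
  have hn : (N : ℝ) ≠ 0 := Nat.cast_ne_zero.mpr (by omega)
  have htI : t ∈ Set.Icc 0 T := Set.Ico_subset_Icc_self ht
  set c := κ₁ / (σ * k * N)
  have hv : ∀ ℓ s, HasDerivAt (fun s => v i t (Function.update x ℓ s))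
      (E t * (Pi.single ℓ 1 : Fin N → ℝ) i + c * (1 - E t)) s := fun ℓ s =>
    hasDerivAt_mul_update_apply_add_mul_sum _ _ _ x ℓ i s
  have hvm : ∀ ℓ s, HasDerivAt (fun s => vm i t (Function.update x ℓ s))
      (E t * (Pi.single ℓ 1 : Fin N → ℝ) i) s := fun ℓ s =>
    hasDerivAt_mul_update_apply_add _ _ x ℓ i s
  have hE := hasDerivAt_exp_mul_sub (σ * k) T t
  have hvt : HasDerivAt (fun s => v i s x) _ t :=
    ((hE.mul_const (x i)).add (((hasDerivAt_const t 1).sub hE).const_mul c |>.mul_const _)).add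
      (hη t htI)
  have hvmt : HasDerivAt (fun s => vm i s x) _ t := (hE.mul_const (x i)).add (hηm t htI)
  simp only [(hv _ _).deriv, (hvm _ _).deriv, hvt.deriv, hvmt.deriv,
    deriv_deriv_eq_zero_of_hasDerivAt_const (hv _), deriv_deriv_eq_zero_of_hasDerivAt_const (hvm _),
    sum_mul_mul_single_add, sum_mul_mul_single, sum_sq_mul_single, Pi.single_eq_same,
    sum_const_zero, mul_zero, add_zero, sum_sub_distrib, Fin.sum_const, nsmul_eq_mul, ← mul_sum,
    ahat, E, c]
  refine ⟨by field_simp, ?_, by ring, by simp [v, E, hηT], by simp [vm, E, hηmT]⟩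
  linear_combination hjb_residual_eq_zero (κ₁ := κ₁) (κ₂ := κ₂) (γ := γ)
    (e := Real.exp (σ * k * (t - T))) hσ.ne' hk.ne' hn (x i) (∑ ℓ, x ℓ) rfl rfl

theorem stmt8 (σ k κ₁ κ₂ γ T : ℝ) (N : ℕ)
    (hσ : 0 < σ) (hk : 0 < k) (hT : 0 < T) (hN : 1 ≤ N)
    (η ηm : ℝ → ℝ) (hηT : η T = 0) (hηmT : ηm T = 0)
    (hη : ∀ t ∈ Set.Icc (0:ℝ) T,
      HasDerivAt η
        (-(σ * Real.exp (σ*k*(t-T)) + κ₁/(k*(N:ℝ)) * (1 - Real.exp (σ*k*(t-T))) + κ₂/(N:ℝ))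
            * ((σ/2) * Real.exp (σ*k*(t-T))
              + (κ₁/k * (1 - Real.exp (σ*k*(t-T))) + κ₂) * (1 - 1/(2*(N:ℝ))))
          + γ*σ^2/2 * (Real.exp (σ*k*(t-T)))^2) t)
    (hηm : ∀ t ∈ Set.Icc (0:ℝ) T,
      HasDerivAt ηm
        (-(σ * (σ * Real.exp (σ*k*(t-T)) + κ₁/(k*(N:ℝ)) * (1 - Real.exp (σ*k*(t-T))) + κ₂/(N:ℝ))
            * Real.exp (σ*k*(t-T)))) t) :
    let E : ℝ → ℝ := fun t => Real.exp (σ*k*(t-T))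
    let ahat : ℝ → ℝ := fun t => σ * E t + κ₁/(k*(N:ℝ)) * (1 - E t) + κ₂/(N:ℝ)
    let v : Fin N → ℝ → (Fin N → ℝ) → ℝ := fun i t x =>
      E t * x i + κ₁/(σ*k*(N:ℝ)) * (1 - E t) * (∑ ℓ, x ℓ) + η t
    let vm : Fin N → ℝ → (Fin N → ℝ) → ℝ := fun i t x => E t * x i + ηm t
    ∀ i : Fin N, ∀ t ∈ Set.Ico (0:ℝ) T, ∀ x : Fin N → ℝ,
      (σ * deriv (fun s => v i t (Function.update x i s)) (x i) + κ₂/(N:ℝ) = ahat t) ∧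
      (deriv (fun s => v i s x) t
        + σ * ∑ ℓ, (ahat t - k * x ℓ) * deriv (fun s => v i t (Function.update x ℓ s)) (x ℓ)
        + σ^2/2 * ∑ ℓ, deriv (deriv (fun s => v i t (Function.update x ℓ s))) (x ℓ)
        - (ahat t)^2/2 + κ₁/(N:ℝ) * ∑ ℓ, x ℓ + κ₂ * ahat t
        - γ*σ^2/2 * ∑ ℓ, (deriv (fun s => vm i t (Function.update x ℓ s)) (x ℓ))^2 = 0) ∧
      (deriv (fun s => vm i s x) t
        + σ * ∑ ℓ, (ahat t - k * x ℓ) * deriv (fun s => vm i t (Function.update x ℓ s)) (x ℓ)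
        + σ^2/2 * ∑ ℓ, deriv (deriv (fun s => vm i t (Function.update x ℓ s))) (x ℓ) = 0) ∧
      (v i T x = x i ∧ vm i T x = x i) :=
  stmt8_general σ k κ₁ κ₂ γ T N hσ hk hN η ηm hηT hηmT hη hηm
end

section
/- Let (Ω, F, (F_k)_{k=0,…,n}, P) be a filtered probability space and let (M_k)_{k=0,…,n} be a real-valued martingale with |M_k| ≤ c almost surely for every k, where c ≥ 0. Write Δ_k := M_{k+1} − M_k. Then E[(Σ_{k=0}^{n−1} Δ_k²)²] ≤ 12c²·E[(M_n − M_0)²] ≤ 48c⁴. -/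
/-!
Write `Δ_k = M_{k+1} - M_k` and expand `(∑ Δ_k²)² = ∑_k (Δ_k⁴ + 2 Δ_k² ∑_{l > k} Δ_l²)`.
Each increment `Δ_l` is orthogonal to `ℱ_l`-measurable weights, so for a bounded
`ℱ_j`-measurable `Y` the cross terms of `(M_m - M_j)² = (∑_{j ≤ l < m} Δ_l)²` vanish against `Y`:
`E[Y (M_m - M_j)²] = ∑_{j ≤ l < m} E[Y Δ_l²]`. With `Y = Δ_k²` and `j = k + 1` this turns the
tail term into `E[Δ_k² (M_n - M_{k+1})²]`; as all increments are bounded by `2c`, the `k`-th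
summand has expectation at most `(4c² + 2 · 4c²) E[Δ_k²]`. With `Y = 1` the same identity gives
`E[∑ Δ_k²] = E[(M_n - M_0)²] ≤ 4c²`.
-/

open MeasureTheory Finset
open scoped ENNReal

theorem sq_sum_range_eq (a : ℕ → ℝ) (n : ℕ) :
    (∑ k ∈ range n, a k) ^ 2
      = ∑ k ∈ range n, (a k * a k + 2 * ∑ l ∈ Ico (k + 1) n, a k * a l) := by
  induction n with
  | zero => simp
  | succ n ih =>
    have htail : ∀ k ∈ range n, a k * a k + 2 * ∑ l ∈ Ico (k + 1) (n + 1), a k * a l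
        = (a k * a k + 2 * ∑ l ∈ Ico (k + 1) n, a k * a l) + 2 * (a k * a n) := fun k hk => by
      rw [sum_Ico_succ_top (mem_range.mp hk)]
      ring
    have hcross : (2 * ∑ k ∈ range n, a k) * a n = ∑ k ∈ range n, 2 * (a k * a n) := by
      rw [mul_assoc, sum_mul, mul_sum]
    rw [sum_range_succ, add_sq, ih, sum_range_succ _ n, sum_congr rfl htail,
      Ico_self, sum_empty, hcross]
    simp only [sum_add_distrib]
    ring

theorem sq_sub_le_four_mul_sq_of_abs_le {x y c : ℝ} (hx : |x| ≤ c) (hy : |y| ≤ c) :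
    (x - y) ^ 2 ≤ 4 * c ^ 2 :=
  calc (x - y) ^ 2 = |x - y| ^ 2 := (sq_abs _).symm
    _ ≤ (2 * c) ^ 2 := pow_le_pow_left₀ (abs_nonneg _) ((abs_sub x y).trans (by linarith)) 2
    _ = 4 * c ^ 2 := by ring

namespace MeasureTheory

theorem integral_mul_le_const_mul_integral {Ω : Type*} {m0 : MeasurableSpace Ω} {P : Measure Ω}
    {f g : Ω → ℝ} {C : ℝ} (hf : Integrable f P) (hfg : Integrable (fun ω => f ω * g ω) P)
    (hf0 : 0 ≤ᵐ[P] f) (hgC : ∀ᵐ ω ∂P, g ω ≤ C) :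
    ∫ ω, f ω * g ω ∂P ≤ C * ∫ ω, f ω ∂P := by
  rw [← integral_const_mul]
  refine integral_mono_ae hfg (hf.const_mul C) ?_
  filter_upwards [hf0, hgC] with ω h0 hC
  rw [mul_comm C]
  exact mul_le_mul_of_nonneg_left hC h0

theorem Martingale.integral_mul_sub_eq_zero {ι Ω : Type*} [Preorder ι] {m0 : MeasurableSpace Ω}
    {P : Measure Ω} {ℱ : Filtration ι m0} {M : ι → Ω → ℝ} [SigmaFiniteFiltration P ℱ]
    (hM : Martingale M ℱ P) {i j : ι} (hij : i ≤ j) {X : Ω → ℝ}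
    (hX : StronglyMeasurable[ℱ i] X) (hXM : Integrable (fun ω => X ω * (M j ω - M i ω)) P) :
    ∫ ω, X ω * (M j ω - M i ω) ∂P = 0 := by
  have hD := (hM.integrable j).sub (hM.integrable i)
  have hcond : P[fun ω => M j ω - M i ω | ℱ i] =ᵐ[P] 0 := by
    filter_upwards [condExp_sub (hM.integrable j) (hM.integrable i) (ℱ i),
      hM.condExp_ae_eq hij, hM.condExp_ae_eq (le_refl i)] with ω h_sub h_j h_i
    change P[M j - M i | ℱ i] ω = 0
    rw [h_sub, Pi.sub_apply, h_j, h_i, sub_self]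
  have hpull : P[X * fun ω => M j ω - M i ω | ℱ i] =ᵐ[P] 0 := by
    filter_upwards [condExp_mul_of_stronglyMeasurable_left hX hXM hD, hcond] with ω h h0
    simp [h, h0]
  calc ∫ ω, X ω * (M j ω - M i ω) ∂P
      = ∫ ω, (P[X * fun ω => M j ω - M i ω | ℱ i]) ω ∂P := (integral_condExp (ℱ.le i)).symm
    _ = 0 := by simp [integral_congr_ae hpull]

variable {Ω : Type*} {m0 : MeasurableSpace Ω} {P : Measure Ω} {ℱ : Filtration ℕ m0}
  {M : ℕ → Ω → ℝ} {n : ℕ} {c : ℝ}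

theorem Martingale.integral_mul_sq_sub_eq_sum [SigmaFiniteFiltration P ℱ] (hM : Martingale M ℱ P)
    {j m : ℕ} (hjm : j ≤ m) (hM2 : ∀ k ≤ m, MemLp (M k) 2 P) {Y : Ω → ℝ}
    (hY : StronglyMeasurable[ℱ j] Y) (hYL : MemLp Y ∞ P) :
    ∫ ω, Y ω * (M m ω - M j ω) ^ 2 ∂P
      = ∑ l ∈ Ico j m, ∫ ω, Y ω * (M (l + 1) ω - M l ω) ^ 2 ∂P := by
  induction m, hjm using Nat.le_induction with
  | base => simp
  | succ m hjm ih =>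
    have hM2_le : ∀ k ≤ m, MemLp (M k) 2 P := fun k hk => hM2 k (hk.trans m.le_succ)
    have hA : MemLp (fun ω => M m ω - M j ω) 2 P := (hM2_le m le_rfl).sub (hM2_le j hjm)
    have hD : MemLp (fun ω => M (m + 1) ω - M m ω) 2 P := (hM2 (m + 1) le_rfl).sub (hM2_le m le_rfl)
    have hYA : StronglyMeasurable[ℱ m] (fun ω => 2 * Y ω * (M m ω - M j ω)) :=
      ((hY.mono (ℱ.mono hjm)).const_mul 2).mul
        ((hM.stronglyAdapted m).sub ((hM.stronglyAdapted j).mono (ℱ.mono hjm)))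
    have hYA_D : Integrable (fun ω => 2 * Y ω * (M m ω - M j ω) * (M (m + 1) ω - M m ω)) P :=
      (((hA.integrable_mul hD).mul_of_top_right hYL).const_mul 2).congr
        (ae_of_all _ fun ω => by simp only [Pi.mul_apply]; ring)
    have hYA2 : Integrable (fun ω => Y ω * (M m ω - M j ω) ^ 2) P :=
      hA.integrable_sq.mul_of_top_right hYL
    have hYD2 : Integrable (fun ω => Y ω * (M (m + 1) ω - M m ω) ^ 2) P :=
      hD.integrable_sq.mul_of_top_right hYL
    calc ∫ ω, Y ω * (M (m + 1) ω - M j ω) ^ 2 ∂P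
        = ∫ ω, Y ω * (M m ω - M j ω) ^ 2 + Y ω * (M (m + 1) ω - M m ω) ^ 2
            + 2 * Y ω * (M m ω - M j ω) * (M (m + 1) ω - M m ω) ∂P :=
          integral_congr_ae (ae_of_all _ fun ω => by ring)
      _ = ∫ ω, Y ω * (M m ω - M j ω) ^ 2 ∂P + ∫ ω, Y ω * (M (m + 1) ω - M m ω) ^ 2 ∂P := by
          rw [integral_add (by exact hYA2.add hYD2) hYA_D, integral_add hYA2 hYD2,
            hM.integral_mul_sub_eq_zero m.le_succ hYA hYA_D, add_zero]
      _ = _ := by rw [ih hM2_le, sum_Ico_succ_top hjm]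

theorem Martingale.integral_sum_sq_increment_eq [SigmaFiniteFiltration P ℱ]
    (hM : Martingale M ℱ P) (hM2 : ∀ k ≤ n, MemLp (M k) 2 P) :
    ∫ ω, ∑ k ∈ range n, (M (k + 1) ω - M k ω) ^ 2 ∂P = ∫ ω, (M n ω - M 0 ω) ^ 2 ∂P := by
  have h := hM.integral_mul_sq_sub_eq_sum n.zero_le hM2 stronglyMeasurable_const
    (memLp_top_const 1)
  simp only [one_mul, ← range_eq_Ico] at h
  rw [h, integral_finsetSum _ fun k hk => by
    exact ((hM2 _ (mem_range.mp hk)).sub (hM2 k (mem_range.mp hk).le)).integrable_sq]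

theorem ae_sq_sub_le (hbdd : ∀ k ≤ n, ∀ᵐ ω ∂P, |M k ω| ≤ c) {i j : ℕ} (hi : i ≤ n)
    (hj : j ≤ n) : ∀ᵐ ω ∂P, (M i ω - M j ω) ^ 2 ≤ 4 * c ^ 2 := by
  filter_upwards [hbdd i hi, hbdd j hj] with ω h_i h_j
  exact sq_sub_le_four_mul_sq_of_abs_le h_i h_j

theorem memLp_top_sq_sub (hmeas : ∀ k, AEStronglyMeasurable (M k) P)
    (hbdd : ∀ k ≤ n, ∀ᵐ ω ∂P, |M k ω| ≤ c) {i j : ℕ} (hi : i ≤ n) (hj : j ≤ n) :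
    MemLp (fun ω => (M i ω - M j ω) ^ 2) ∞ P := by
  refine memLp_top_of_bound (((hmeas i).sub (hmeas j)).pow 2) (4 * c ^ 2) ?_
  filter_upwards [ae_sq_sub_le hbdd hi hj] with ω h
  rwa [Real.norm_of_nonneg (sq_nonneg _)]

theorem integrable_sq_sub_mul_sq_sub [IsFiniteMeasure P]
    (hmeas : ∀ k, AEStronglyMeasurable (M k) P) (hbdd : ∀ k ≤ n, ∀ᵐ ω ∂P, |M k ω| ≤ c)
    {i j i' j' : ℕ} (hi : i ≤ n) (hj : j ≤ n) (hi' : i' ≤ n) (hj' : j' ≤ n) :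
    Integrable (fun ω => (M i ω - M j ω) ^ 2 * (M i' ω - M j' ω) ^ 2) P :=
  ((memLp_top_sq_sub hmeas hbdd hi' hj').integrable le_top).mul_of_top_right
    (memLp_top_sq_sub hmeas hbdd hi hj)

theorem integral_sq_sub_le [IsProbabilityMeasure P]
    (hmeas : ∀ k, AEStronglyMeasurable (M k) P) (hbdd : ∀ k ≤ n, ∀ᵐ ω ∂P, |M k ω| ≤ c)
    {i j : ℕ} (hi : i ≤ n) (hj : j ≤ n) : ∫ ω, (M i ω - M j ω) ^ 2 ∂P ≤ 4 * c ^ 2 :=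
  (integral_mono_ae ((memLp_top_sq_sub hmeas hbdd hi hj).integrable le_top)
    (integrable_const _) (ae_sq_sub_le hbdd hi hj)).trans_eq (by simp)

theorem integrable_sq_increment_mul_tail [IsFiniteMeasure P]
    (hmeas : ∀ k, AEStronglyMeasurable (M k) P) (hbdd : ∀ k ≤ n, ∀ᵐ ω ∂P, |M k ω| ≤ c)
    {k : ℕ} (hk : k < n) :
    Integrable (fun ω => (M (k + 1) ω - M k ω) ^ 2 * (M (k + 1) ω - M k ω) ^ 2
      + 2 * ∑ l ∈ Ico (k + 1) n, (M (k + 1) ω - M k ω) ^ 2 * (M (l + 1) ω - M l ω) ^ 2) P := by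
  refine (integrable_sq_sub_mul_sq_sub hmeas hbdd hk hk.le hk hk.le).add
    ((integrable_finsetSum _ fun l hl => ?_).const_mul 2)
  obtain ⟨-, hl⟩ := mem_Ico.mp hl
  exact integrable_sq_sub_mul_sq_sub hmeas hbdd hk hk.le hl hl.le

theorem Martingale.integral_sq_increment_mul_tail_le [IsFiniteMeasure P] (hM : Martingale M ℱ P)
    (hbdd : ∀ k ≤ n, ∀ᵐ ω ∂P, |M k ω| ≤ c) {k : ℕ} (hk : k < n) :
    ∫ ω, (M (k + 1) ω - M k ω) ^ 2 * (M (k + 1) ω - M k ω) ^ 2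
        + 2 * ∑ l ∈ Ico (k + 1) n, (M (k + 1) ω - M k ω) ^ 2 * (M (l + 1) ω - M l ω) ^ 2 ∂P
      ≤ 12 * c ^ 2 * ∫ ω, (M (k + 1) ω - M k ω) ^ 2 ∂P := by
  have hmeas k : AEStronglyMeasurable (M k) P :=
    ((hM.stronglyMeasurable k).mono (ℱ.le k)).aestronglyMeasurable
  have hint {i j : ℕ} (hi : i ≤ n) (hj : j ≤ n) :=
    integrable_sq_sub_mul_sq_sub hmeas hbdd hk hk.le hi hj
  have hΔ : Integrable (fun ω => (M (k + 1) ω - M k ω) ^ 2) P :=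
    (memLp_top_sq_sub hmeas hbdd hk hk.le).integrable le_top
  have htail : ∑ l ∈ Ico (k + 1) n, ∫ ω, (M (k + 1) ω - M k ω) ^ 2 * (M (l + 1) ω - M l ω) ^ 2 ∂P
      = ∫ ω, (M (k + 1) ω - M k ω) ^ 2 * (M n ω - M (k + 1) ω) ^ 2 ∂P := by
    refine (hM.integral_mul_sq_sub_eq_sum hk (fun i hi => ?_) ?_
      (memLp_top_sq_sub hmeas hbdd hk hk.le)).symm
    · exact MemLp.of_bound (hmeas i) c (by simpa using hbdd i hi)
    · exact ((hM.stronglyMeasurable _).sub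
        ((hM.stronglyMeasurable k).mono (ℱ.mono k.le_succ))).pow 2
  calc _ = ∫ ω, (M (k + 1) ω - M k ω) ^ 2 * (M (k + 1) ω - M k ω) ^ 2 ∂P
        + 2 * ∫ ω, (M (k + 1) ω - M k ω) ^ 2 * (M n ω - M (k + 1) ω) ^ 2 ∂P := by
        rw [integral_add (hint hk hk.le) ((integrable_finsetSum _ fun l hl => ?_).const_mul 2),
          integral_const_mul, integral_finsetSum _ fun l hl => ?_, htail]
        all_goals obtain ⟨-, hl⟩ := mem_Ico.mp hl; exact hint hl hl.le
    _ ≤ 4 * c ^ 2 * ∫ ω, (M (k + 1) ω - M k ω) ^ 2 ∂P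
        + 2 * (4 * c ^ 2 * ∫ ω, (M (k + 1) ω - M k ω) ^ 2 ∂P) := by
        gcongr
        · exact integral_mul_le_const_mul_integral hΔ (hint hk hk.le)
            (ae_of_all _ fun ω => sq_nonneg _) (ae_sq_sub_le hbdd hk hk.le)
        · exact integral_mul_le_const_mul_integral hΔ (hint le_rfl hk)
            (ae_of_all _ fun ω => sq_nonneg _) (ae_sq_sub_le hbdd le_rfl hk)
    _ = 12 * c ^ 2 * ∫ ω, (M (k + 1) ω - M k ω) ^ 2 ∂P := by ring

end MeasureTheory

theorem stmt11_general {Ω : Type*} {m0 : MeasurableSpace Ω} (P : Measure Ω) [IsProbabilityMeasure P]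
    (ℱ : Filtration ℕ m0) (M : ℕ → Ω → ℝ) (hM : Martingale M ℱ P)
    (n : ℕ) (c : ℝ)
    (hbdd : ∀ k ≤ n, ∀ᵐ ω ∂P, |M k ω| ≤ c) :
    (∫ ω, (∑ k ∈ Finset.range n, (M (k+1) ω - M k ω)^2)^2 ∂P
      ≤ 12 * c^2 * ∫ ω, (M n ω - M 0 ω)^2 ∂P) ∧
    12 * c^2 * ∫ ω, (M n ω - M 0 ω)^2 ∂P ≤ 48 * c^4 := by
  have hmeas k : AEStronglyMeasurable (M k) P :=
    ((hM.stronglyMeasurable k).mono (ℱ.le k)).aestronglyMeasurable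
  have hM2 : ∀ k ≤ n, MemLp (M k) 2 P := fun k hk =>
    MemLp.of_bound (hmeas k) c (by simpa using hbdd k hk)
  constructor
  · calc ∫ ω, (∑ k ∈ range n, (M (k + 1) ω - M k ω) ^ 2) ^ 2 ∂P
        = ∑ k ∈ range n, ∫ ω, (M (k + 1) ω - M k ω) ^ 2 * (M (k + 1) ω - M k ω) ^ 2
            + 2 * ∑ l ∈ Ico (k + 1) n, (M (k + 1) ω - M k ω) ^ 2 * (M (l + 1) ω - M l ω) ^ 2 ∂P := by
          simp_rw [sq_sum_range_eq]
          exact integral_finsetSum _ fun k hk =>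
            integrable_sq_increment_mul_tail hmeas hbdd (mem_range.mp hk)
      _ ≤ ∑ k ∈ range n, 12 * c ^ 2 * ∫ ω, (M (k + 1) ω - M k ω) ^ 2 ∂P :=
          sum_le_sum fun k hk => hM.integral_sq_increment_mul_tail_le hbdd (mem_range.mp hk)
      _ = 12 * c ^ 2 * ∫ ω, (M n ω - M 0 ω) ^ 2 ∂P := by
          rw [← mul_sum, ← hM.integral_sum_sq_increment_eq hM2, integral_finsetSum _ fun k hk => by
            exact ((hM2 _ (mem_range.mp hk)).sub (hM2 k (mem_range.mp hk).le)).integrable_sq]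
  · calc 12 * c ^ 2 * ∫ ω, (M n ω - M 0 ω) ^ 2 ∂P ≤ 12 * c ^ 2 * (4 * c ^ 2) := by
          gcongr
          exact integral_sq_sub_le hmeas hbdd le_rfl n.zero_le
      _ = 48 * c ^ 4 := by ring

theorem stmt11 {Ω : Type*} {m0 : MeasurableSpace Ω} (P : Measure Ω) [IsProbabilityMeasure P]
    (ℱ : Filtration ℕ m0) (M : ℕ → Ω → ℝ) (hM : Martingale M ℱ P)
    (n : ℕ) (c : ℝ) (hc : 0 ≤ c)
    (hbdd : ∀ k ≤ n, ∀ᵐ ω ∂P, |M k ω| ≤ c) :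
    (∫ ω, (∑ k ∈ Finset.range n, (M (k+1) ω - M k ω)^2)^2 ∂P
      ≤ 12 * c^2 * ∫ ω, (M n ω - M 0 ω)^2 ∂P) ∧
    12 * c^2 * ∫ ω, (M n ω - M 0 ω)^2 ∂P ≤ 48 * c^4 :=
  stmt11_general P ℱ M hM n c hbdd
end
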